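/- arXiv:math/9402203 — 5 statements merged into one kernel-verified Lean document; each statement's English description precedes it below -/
import Mathlib

section
/- Let E be a Banach space, 1 < p ≤ ∞, and let φ₁,...,φ_k ∈ E' satisfy A^p·∑|α_j|^p ≤ ‖∑ α_j φ_j‖^p for all scalars (α_j). Then for every positive integer n and all scalars (α_j), sup_{‖x‖≤1} |∑_{j=1}^k α_j φ_j(x)^n| ≥ A^n · max_{1≤j≤k} |α_j|. -/
open scoped ENNReal NNReal
open Finset RCLike
lemma mem_closure_single_of_lower_bound
    {𝕜 : Type*} [RCLike 𝕜] {E : Type*} [NormedAddCommGroup E] [NormedSpace 𝕜 E]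
    {k : ℕ} (φ : Fin k → (E →L[𝕜] 𝕜)) {A : ℝ} (hA : 0 < A) (j₀ : Fin k)
    (h : ∀ β : Fin k → 𝕜, A * ‖β j₀‖ ≤ ‖∑ j, β j • φ j‖) :
    (Pi.single j₀ ((A : 𝕜)) : Fin k → 𝕜) ∈
      closure ((fun x => fun j => φ j x) '' Metric.closedBall (0 : E) 1) := by
  by_contra hx
  set S : E →L[𝕜] (Fin k → 𝕜) := ContinuousLinearMap.pi φ with hS
  have himg : (fun x => fun j => φ j x) '' Metric.closedBall (0 : E) 1
      = ⇑S '' Metric.closedBall (0 : E) 1 := rfl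
  rw [himg] at hx
  have hconv : Convex ℝ (closure (⇑S '' Metric.closedBall (0 : E) 1)) := by
    apply Convex.closure
    rintro _ ⟨x, hxm, rfl⟩ _ ⟨y, hym, rfl⟩ a b ha hb hab
    refine ⟨(a : 𝕜) • x + (b : 𝕜) • y, ?_, ?_⟩
    · simp only [Metric.mem_closedBall, dist_zero_right] at hxm hym ⊢
      calc ‖(a : 𝕜) • x + (b : 𝕜) • y‖ ≤ ‖(a : 𝕜) • x‖ + ‖(b : 𝕜) • y‖ := norm_add_le _ _
        _ = a * ‖x‖ + b * ‖y‖ := by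
            rw [norm_smul, norm_smul, RCLike.norm_ofReal, RCLike.norm_ofReal,
              abs_of_nonneg ha, abs_of_nonneg hb]
        _ ≤ a * 1 + b * 1 := by
            gcongr
        _ = 1 := by rw [mul_one, mul_one, hab]
    · rw [map_add, map_smul, map_smul, RCLike.real_smul_eq_coe_smul (K := 𝕜),
        RCLike.real_smul_eq_coe_smul (K := 𝕜) b]
  obtain ⟨g, u, hfu, huf⟩ :=
    RCLike.geometric_hahn_banach_closed_point (𝕜 := 𝕜) hconv isClosed_closure hx
  set β : Fin k → 𝕜 := fun j => g (Pi.single j 1) with hβ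
  have hg : ∀ y : Fin k → 𝕜, g y = ∑ j, y j * β j := by
    intro y
    conv_lhs => rw [← Finset.univ_sum_single y]
    rw [map_sum]
    refine Finset.sum_congr rfl fun j _ => ?_
    have h1 : (Pi.single j (y j) : Fin k → 𝕜) = y j • (Pi.single j 1 : Fin k → 𝕜) := by
      rw [← Pi.single_smul, smul_eq_mul, mul_one]
    rw [h1, map_smul, smul_eq_mul]
  have hmem : ∀ x ∈ Metric.closedBall (0 : E) 1,
      S x ∈ closure (⇑S '' Metric.closedBall (0 : E) 1) :=
    fun x hx1 => subset_closure ⟨x, hx1, rfl⟩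
  have hu0 : 0 < u := by
    have h0 : re (g (S 0)) < u := hfu _ (hmem 0 (by simp))
    simpa using h0
  have hball : ∀ x ∈ Metric.closedBall (0 : E) 1, ‖g (S x)‖ < u := by
    intro x hx1
    rcases eq_or_ne (g (S x)) 0 with h0 | h0
    · rw [h0, norm_zero]; exact hu0
    · set c : 𝕜 := (‖g (S x)‖ : 𝕜) / g (S x) with hc
      have hcn : ‖c‖ = 1 := by
        rw [hc, norm_div, RCLike.norm_ofReal, abs_of_nonneg (norm_nonneg _),
          div_self (norm_ne_zero_iff.2 h0)]
      have hcx : c • x ∈ Metric.closedBall (0 : E) 1 := by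
        simp only [Metric.mem_closedBall, dist_zero_right] at hx1 ⊢
        rw [norm_smul, hcn, one_mul]; exact hx1
      have h2 : re (g (S (c • x))) < u := hfu _ (hmem _ hcx)
      have h3 : g (S (c • x)) = (‖g (S x)‖ : 𝕜) := by
        rw [map_smul, map_smul, smul_eq_mul, hc, div_mul_cancel₀ _ h0]
      rw [h3, RCLike.ofReal_re] at h2
      exact h2
  have hTg : ∀ y : E, (∑ j, β j • φ j) y = g (S y) := by
    intro y
    rw [hg]
    simp only [ContinuousLinearMap.sum_apply, ContinuousLinearMap.smul_apply, hS,
      ContinuousLinearMap.pi_apply, smul_eq_mul]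
    exact Finset.sum_congr rfl fun j _ => mul_comm _ _
  have hT : ‖∑ j, β j • φ j‖ ≤ u := by
    apply ContinuousLinearMap.opNorm_le_bound _ hu0.le
    intro x
    rcases eq_or_ne x 0 with rfl | hx0
    · simp [hu0.le]
    · have hxn : (0 : ℝ) < ‖x‖ := norm_pos_iff.2 hx0
      have h1 : ((‖x‖⁻¹ : ℝ) : 𝕜) • x ∈ Metric.closedBall (0 : E) 1 := by
        simp only [Metric.mem_closedBall, dist_zero_right, norm_smul, RCLike.norm_ofReal,
          abs_of_pos (inv_pos.2 hxn)]
        rw [inv_mul_cancel₀ hxn.ne']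
      have h2 : ‖(∑ j, β j • φ j) (((‖x‖⁻¹ : ℝ) : 𝕜) • x)‖ ≤ u := by
        rw [hTg]; exact (hball _ h1).le
      have h3 : (∑ j, β j • φ j) (((‖x‖⁻¹ : ℝ) : 𝕜) • x)
          = ((‖x‖⁻¹ : ℝ) : 𝕜) • (∑ j, β j • φ j) x := map_smul _ _ _
      rw [h3, norm_smul, RCLike.norm_ofReal, abs_of_pos (inv_pos.2 hxn)] at h2
      calc ‖(∑ j, β j • φ j) x‖ = ‖x‖ * (‖x‖⁻¹ * ‖(∑ j, β j • φ j) x‖) := by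
            rw [← mul_assoc, mul_inv_cancel₀ hxn.ne', one_mul]
        _ ≤ ‖x‖ * u := mul_le_mul_of_nonneg_left h2 hxn.le
        _ = u * ‖x‖ := mul_comm _ _
  have h3 : g (Pi.single j₀ (A : 𝕜)) = (A : 𝕜) * β j₀ := by
    rw [hg, Finset.sum_eq_single j₀]
    · rw [Pi.single_eq_same]
    · intro b _ hb; rw [Pi.single_eq_of_ne hb, zero_mul]
    · intro hb; exact absurd (Finset.mem_univ j₀) hb
  have h4 : re ((A : 𝕜) * β j₀) ≤ A * ‖β j₀‖ := by
    calc re ((A : 𝕜) * β j₀) ≤ ‖(A : 𝕜) * β j₀‖ := RCLike.re_le_norm _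
      _ = A * ‖β j₀‖ := by rw [norm_mul, RCLike.norm_ofReal, abs_of_pos hA]
  have h5 : u < re (g (Pi.single j₀ (A : 𝕜))) := huf
  rw [h3] at h5
  linarith [h β, hT]

/-- Lower `ℓ_p` estimates for linear functionals lift to lower `ℓ_∞` estimates for
their `n`-th powers, for every positive integer `n`. -/
theorem powers_lower_estimate_of_lower_lp_estimate
    {𝕜 : Type*} [RCLike 𝕜] {E : Type*} [NormedAddCommGroup E] [NormedSpace 𝕜 E]
    [CompleteSpace E]
    (k : ℕ) (φ : Fin k → (E →L[𝕜] 𝕜)) (p : ℝ≥0∞) (hp : 1 < p)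
    (A : ℝ) (hA : 0 < A)
    (hlb : ∀ α : Fin k → 𝕜,
      if p = ⊤ then A * ↑(Finset.univ.sup fun j => ‖α j‖₊) ≤ ‖∑ j, α j • φ j‖
      else A ^ p.toReal * ∑ j, ‖α j‖ ^ p.toReal ≤ ‖∑ j, α j • φ j‖ ^ p.toReal)
    (n : ℕ) (hn : 1 ≤ n) :
    ∀ α : Fin k → 𝕜,
      A ^ n * ↑(Finset.univ.sup fun j => ‖α j‖₊) ≤
        ⨆ x : {x : E // ‖x‖ ≤ 1}, ‖∑ j, α j * (φ j (x : E)) ^ n‖ := by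
  intro α
  have hbdd : BddAbove (Set.range fun x : {x : E // ‖x‖ ≤ 1} =>
      ‖∑ j, α j * (φ j (x : E)) ^ n‖) := by
    refine ⟨∑ j, ‖α j‖ * ‖φ j‖ ^ n, ?_⟩
    rintro _ ⟨x, rfl⟩
    calc ‖∑ j, α j * (φ j (x : E)) ^ n‖ ≤ ∑ j, ‖α j * (φ j (x : E)) ^ n‖ := norm_sum_le _ _
      _ = ∑ j, ‖α j‖ * ‖φ j (x : E)‖ ^ n := by simp [norm_mul, norm_pow]
      _ ≤ ∑ j, ‖α j‖ * ‖φ j‖ ^ n := by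
          refine Finset.sum_le_sum fun j _ => ?_
          gcongr
          calc ‖φ j (x : E)‖ ≤ ‖φ j‖ * ‖(x : E)‖ := (φ j).le_opNorm _
            _ ≤ ‖φ j‖ * 1 := by gcongr; exact x.2
            _ = ‖φ j‖ := mul_one _
  have hnonneg : (0 : ℝ) ≤ ⨆ x : {x : E // ‖x‖ ≤ 1}, ‖∑ j, α j * (φ j (x : E)) ^ n‖ :=
    Real.iSup_nonneg fun x => norm_nonneg _
  rcases eq_or_ne ((Finset.univ.sup fun j => ‖α j‖₊ : ℝ≥0)) 0 with hM | hM
  · rw [hM]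
    simpa using hnonneg
  -- pick the index realizing the max
  have hne : (Finset.univ : Finset (Fin k)).Nonempty := by
    by_contra hne
    rw [Finset.not_nonempty_iff_eq_empty] at hne
    rw [hne] at hM
    simp at hM
  obtain ⟨j₀, -, hj₀⟩ := Finset.exists_mem_eq_sup Finset.univ hne fun j => ‖α j‖₊
  have hMj : ((Finset.univ.sup fun j => ‖α j‖₊ : ℝ≥0) : ℝ) = ‖α j₀‖ := by
    rw [hj₀]; exact coe_nnnorm _
  -- lower bound for the j₀ coordinate
  have hj : ∀ β : Fin k → 𝕜, A * ‖β j₀‖ ≤ ‖∑ j, β j • φ j‖ := by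
    intro β
    have hβ := hlb β
    by_cases hptop : p = ⊤
    · rw [if_pos hptop] at hβ
      refine le_trans ?_ hβ
      have h1 : (‖β j₀‖₊ : ℝ) ≤ ((Finset.univ.sup fun j => ‖β j‖₊ : ℝ≥0) : ℝ) := by
        exact_mod_cast Finset.le_sup (f := fun j => ‖β j‖₊) (Finset.mem_univ j₀)
      rw [coe_nnnorm] at h1
      nlinarith
    · rw [if_neg hptop] at hβ
      have ht : 0 < p.toReal := ENNReal.toReal_pos (zero_lt_one.trans hp).ne' hptop
      have h1 : ‖β j₀‖ ^ p.toReal ≤ ∑ j, ‖β j‖ ^ p.toReal :=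
        Finset.single_le_sum (f := fun j => ‖β j‖ ^ p.toReal)
          (fun j _ => Real.rpow_nonneg (norm_nonneg _) _) (Finset.mem_univ j₀)
      have h2 : (A * ‖β j₀‖) ^ p.toReal ≤ ‖∑ j, β j • φ j‖ ^ p.toReal := by
        rw [Real.mul_rpow hA.le (norm_nonneg _)]
        calc A ^ p.toReal * ‖β j₀‖ ^ p.toReal ≤ A ^ p.toReal * ∑ j, ‖β j‖ ^ p.toReal := by
              have : (0:ℝ) ≤ A ^ p.toReal := Real.rpow_nonneg hA.le _
              nlinarith
          _ ≤ _ := hβ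
      exact (Real.rpow_le_rpow_iff (by positivity) (norm_nonneg _) ht).1 h2
  have hcl := mem_closure_single_of_lower_bound φ hA j₀ hj
  -- key estimate for each small ε
  have key : ∀ ε : ℝ, 0 < ε → ε < A →
      ‖α j₀‖ * (A - ε) ^ n - (∑ j, ‖α j‖) * ε ^ n ≤
        ⨆ x : {x : E // ‖x‖ ≤ 1}, ‖∑ j, α j * (φ j (x : E)) ^ n‖ := by
    intro ε hε hεA
    rw [Metric.mem_closure_iff] at hcl
    obtain ⟨y, ⟨x, hxball, rfl⟩, hdist⟩ := hcl ε hε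
    have hxn : ‖x‖ ≤ 1 := by simpa [Metric.mem_closedBall, dist_zero_right] using hxball
    have hcomp : ∀ j, dist ((Pi.single j₀ ((A : 𝕜)) : Fin k → 𝕜) j) (φ j x) < ε := by
      intro j
      refine lt_of_le_of_lt ?_ hdist
      exact dist_le_pi_dist (Pi.single j₀ ((A : 𝕜))) (fun j => φ j x) j
    have hj₀x : ‖(A : 𝕜) - φ j₀ x‖ < ε := by
      have := hcomp j₀
      rwa [Pi.single_eq_same, dist_eq_norm] at this
    have hjx : ∀ j, j ≠ j₀ → ‖φ j x‖ < ε := by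
      intro j hjne
      have := hcomp j
      rwa [Pi.single_eq_of_ne hjne, dist_eq_norm, zero_sub, norm_neg] at this
    have hA1 : A - ε ≤ ‖φ j₀ x‖ := by
      have h1 : ‖(A : 𝕜)‖ - ‖φ j₀ x‖ ≤ ‖(A : 𝕜) - φ j₀ x‖ := norm_sub_norm_le _ _
      rw [RCLike.norm_ofReal, abs_of_pos hA] at h1
      linarith
    have hmain : ‖α j₀‖ * (A - ε) ^ n - (∑ j, ‖α j‖) * ε ^ n ≤
        ‖∑ j, α j * (φ j x) ^ n‖ := by
      have hsplit : ∑ j, α j * (φ j x) ^ n =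
          α j₀ * (φ j₀ x) ^ n + ∑ j ∈ Finset.univ.erase j₀, α j * (φ j x) ^ n :=
        (Finset.add_sum_erase _ _ (Finset.mem_univ j₀)).symm
      have h6 : ‖α j₀ * (φ j₀ x) ^ n‖ - ‖∑ j ∈ Finset.univ.erase j₀, α j * (φ j x) ^ n‖ ≤
          ‖∑ j, α j * (φ j x) ^ n‖ := by
        rw [hsplit]
        calc ‖α j₀ * (φ j₀ x) ^ n‖ - ‖∑ j ∈ Finset.univ.erase j₀, α j * (φ j x) ^ n‖
            = ‖α j₀ * (φ j₀ x) ^ n‖ - ‖-∑ j ∈ Finset.univ.erase j₀, α j * (φ j x) ^ n‖ := by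
              rw [norm_neg]
          _ ≤ ‖α j₀ * (φ j₀ x) ^ n - -∑ j ∈ Finset.univ.erase j₀, α j * (φ j x) ^ n‖ :=
              norm_sub_norm_le _ _
          _ = ‖α j₀ * (φ j₀ x) ^ n + ∑ j ∈ Finset.univ.erase j₀, α j * (φ j x) ^ n‖ := by
              rw [sub_neg_eq_add]
      have hfirst : ‖α j₀‖ * (A - ε) ^ n ≤ ‖α j₀ * (φ j₀ x) ^ n‖ := by
        rw [norm_mul, norm_pow]
        gcongr
      have hrest : ‖∑ j ∈ Finset.univ.erase j₀, α j * (φ j x) ^ n‖ ≤ (∑ j, ‖α j‖) * ε ^ n := by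
        calc ‖∑ j ∈ Finset.univ.erase j₀, α j * (φ j x) ^ n‖
            ≤ ∑ j ∈ Finset.univ.erase j₀, ‖α j * (φ j x) ^ n‖ := norm_sum_le _ _
          _ ≤ ∑ j ∈ Finset.univ.erase j₀, ‖α j‖ * ε ^ n := by
              refine Finset.sum_le_sum fun j hj' => ?_
              rw [norm_mul, norm_pow]
              gcongr
              exact (hjx j (Finset.ne_of_mem_erase hj')).le
          _ ≤ ∑ j, ‖α j‖ * ε ^ n := by
              refine Finset.sum_le_sum_of_subset_of_nonneg (Finset.erase_subset _ _)
                fun j _ _ => by positivity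
          _ = (∑ j, ‖α j‖) * ε ^ n := by rw [Finset.sum_mul]
      linarith
    exact hmain.trans (le_ciSup hbdd ⟨x, hxn⟩)
  -- pass to the limit ε → 0⁺
  have hcont : Continuous fun ε : ℝ => ‖α j₀‖ * (A - ε) ^ n - (∑ j, ‖α j‖) * ε ^ n := by
    fun_prop
  have h0 : ‖α j₀‖ * (A - 0) ^ n - (∑ j, ‖α j‖) * 0 ^ n = ‖α j₀‖ * A ^ n := by
    simp [zero_pow (by omega : n ≠ 0)]
  have htend : Filter.Tendsto (fun ε : ℝ => ‖α j₀‖ * (A - ε) ^ n - (∑ j, ‖α j‖) * ε ^ n)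
      (nhdsWithin 0 (Set.Ioi 0)) (nhds (‖α j₀‖ * A ^ n)) := by
    have := (hcont.tendsto 0).mono_left (nhdsWithin_le_nhds (s := Set.Ioi 0))
    rwa [h0] at this
  have hev : ∀ᶠ ε in nhdsWithin (0 : ℝ) (Set.Ioi 0),
      ‖α j₀‖ * (A - ε) ^ n - (∑ j, ‖α j‖) * ε ^ n ≤
        ⨆ x : {x : E // ‖x‖ ≤ 1}, ‖∑ j, α j * (φ j (x : E)) ^ n‖ := by
    filter_upwards [self_mem_nhdsWithin, eventually_nhdsWithin_of_eventually_nhds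
      (gt_mem_nhds hA)] with ε hε1 hε2
    exact key ε hε1 hε2
  have hfin := le_of_tendsto htend hev
  rw [hMj, mul_comm]
  exact hfin
end

section
/- Let E be a Banach space, 1 < p ≤ ∞, φ₁,...,φ_k ∈ E', and A, B > 0 with A^p·∑|α_j|^p ≤ ‖∑ α_j φ_j‖^p ≤ B^p·∑|α_j|^p for all scalars (α_j). Then for every integer n ≥ q (1/p + 1/q = 1) and all scalars (α_j): A^n·max_j|α_j| ≤ sup_{‖x‖≤1}|∑ α_j φ_j(x)^n| ≤ B^n·max_j|α_j|. -/
open scoped ENNReal NNReal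
open Finset

private lemma aux_rpow_le {x y : ℝ} (t : ℝ) (hy : 0 ≤ y) (ht : 0 < t)
    (h : x ^ t ≤ y ^ t) : x ≤ y := by
  by_contra hc
  push_neg at hc
  exact absurd h (not_le.2 (Real.rpow_lt_rpow hy hc ht))

set_option maxHeartbeats 1000000 in
/-- Theorem 1 of the paper: two-sided `ℓ_p` estimates for linear functionals lift to
two-sided `ℓ_∞` estimates for their `n`-th powers, for any integer `n ≥ q`. -/
theorem powers_two_sided_estimate_of_lp_estimates
    {𝕜 : Type*} [RCLike 𝕜] {E : Type*} [NormedAddCommGroup E] [NormedSpace 𝕜 E]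
    [CompleteSpace E]
    (k : ℕ) (φ : Fin k → (E →L[𝕜] 𝕜)) (p : ℝ≥0∞) (hp : 1 < p)
    (q : ℝ) (hpq : p.toReal⁻¹ + q⁻¹ = 1) (A B : ℝ) (hA : 0 < A) (hB : 0 < B)
    (hest : ∀ α : Fin k → 𝕜,
      if p = ⊤ then
        A * ↑(Finset.univ.sup fun j => ‖α j‖₊) ≤ ‖∑ j, α j • φ j‖ ∧
        ‖∑ j, α j • φ j‖ ≤ B * ↑(Finset.univ.sup fun j => ‖α j‖₊)
      else
        A ^ p.toReal * ∑ j, ‖α j‖ ^ p.toReal ≤ ‖∑ j, α j • φ j‖ ^ p.toReal ∧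
        ‖∑ j, α j • φ j‖ ^ p.toReal ≤ B ^ p.toReal * ∑ j, ‖α j‖ ^ p.toReal)
    (n : ℕ) (hn : q ≤ (n : ℝ)) :
    ∀ α : Fin k → 𝕜,
      A ^ n * ↑(Finset.univ.sup fun j => ‖α j‖₊) ≤
        (⨆ x : {x : E // ‖x‖ ≤ 1}, ‖∑ j, α j * (φ j (x : E)) ^ n‖) ∧
      (⨆ x : {x : E // ‖x‖ ≤ 1}, ‖∑ j, α j * (φ j (x : E)) ^ n‖) ≤
        B ^ n * ↑(Finset.univ.sup fun j => ‖α j‖₊) := by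
  -- basic facts about `q` and `p.toReal`
  have htop_q : p = ⊤ → q = 1 := by
    intro hptop
    have ht : p.toReal = 0 := by simp [hptop]
    rw [ht] at hpq
    have : q⁻¹ = 1 := by simpa using hpq
    simpa using congrArg (·⁻¹) this
  have hfin : p ≠ ⊤ →
      1 < p.toReal ∧ 1 < q ∧ (q - 1) * p.toReal = q ∧ q * (p.toReal - 1) = p.toReal := by
    intro hptop
    have ht1 : 1 < p.toReal := by
      rw [← ENNReal.toReal_one]
      exact (ENNReal.toReal_lt_toReal (by simp) hptop).mpr hp
    have ht0 : 0 < p.toReal := by linarith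
    have hqinv : q⁻¹ = 1 - p.toReal⁻¹ := by linarith
    have hqinvpos : 0 < q⁻¹ := by
      rw [hqinv]
      have : p.toReal⁻¹ < 1 := by rw [inv_lt_one_iff₀]; right; exact ht1
      linarith
    have hq0 : 0 < q := inv_pos.mp hqinvpos
    have hq1 : 1 < q := by
      have h2 : q⁻¹ < 1 := by
        rw [hqinv]
        have : 0 < p.toReal⁻¹ := by positivity
        linarith
      have := (one_lt_inv_iff₀ (a := q⁻¹)).2 ⟨hqinvpos, h2⟩
      rwa [inv_inv] at this
    have hrel : q + p.toReal = q * p.toReal := by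
      field_simp at hpq
      linarith
    refine ⟨ht1, hq1, ?_, ?_⟩ <;> nlinarith [mul_comm q p.toReal]
  have hq1 : 1 ≤ q := by
    by_cases hptop : p = ⊤
    · exact (htop_q hptop).ge
    · exact ((hfin hptop).2.1).le
  have hq0 : 0 < q := lt_of_lt_of_le one_pos hq1
  have hn1 : 1 ≤ n := by exact_mod_cast Nat.one_le_cast.mp (hq1.trans hn)
  have hn0 : n ≠ 0 := by omega
  -- coordinate bound: each functional has norm at most B
  have hcoord : ∀ j, ‖φ j‖ ≤ B := by
    intro j
    set e : Fin k → 𝕜 := Pi.single j 1 with he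
    have h := hest e
    have hsum : ∑ i, e i • φ i = φ j := by
      rw [Finset.sum_eq_single j]
      · simp [he]
      · intro i _ hij
        rw [he, Pi.single_eq_of_ne hij]
        exact zero_smul 𝕜 (φ i)
      · simp
    by_cases hptop : p = ⊤
    · rw [if_pos hptop] at h
      have h2 := h.2
      rw [hsum] at h2
      have hsup : (univ.sup fun i => ‖e i‖₊) ≤ 1 := by
        refine Finset.sup_le fun i _ => ?_
        by_cases hij : i = j
        · subst hij; simp [he]
        · simp [he, Pi.single_eq_of_ne hij]
      calc ‖φ j‖ ≤ B * ↑(univ.sup fun i => ‖e i‖₊) := h2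
        _ ≤ B * 1 := by
            refine mul_le_mul_of_nonneg_left ?_ hB.le
            exact_mod_cast hsup
        _ = B := mul_one B
    · rw [if_neg hptop] at h
      have h2 := h.2
      rw [hsum] at h2
      have ht0 : 0 < p.toReal := lt_trans one_pos (hfin hptop).1
      have hsum2 : ∑ i, ‖e i‖ ^ p.toReal = 1 := by
        rw [Finset.sum_eq_single j]
        · simp [he]
        · intro i _ hij
          simp [he, Pi.single_eq_of_ne hij, Real.zero_rpow ht0.ne']
        · simp
      rw [hsum2, mul_one] at h2
      exact aux_rpow_le p.toReal hB.le ht0 h2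
  -- dual bound: for x in the unit ball, the q-sum of |φ j x| is at most B^q
  have hdual : ∀ x : E, ‖x‖ ≤ 1 → ∑ j, ‖φ j x‖ ^ q ≤ B ^ q := by
    intro x hx
    set s : Fin k → ℝ := fun j => ‖φ j x‖ with hs_def
    set α' : Fin k → 𝕜 := fun j => (starRingEnd 𝕜) (φ j x) * ((s j ^ (q - 2) : ℝ) : 𝕜)
      with hα'_def
    have hαφ : ∀ j, α' j * φ j x = ((s j ^ q : ℝ) : 𝕜) := by
      intro j
      rcases eq_or_ne (φ j x) 0 with h | h
      · simp only [hα'_def, h, map_zero, zero_mul, mul_zero]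
        have : s j = 0 := by simp [hs_def, h]
        rw [this, Real.zero_rpow hq0.ne']
        simp
      · have hs : 0 < s j := by simpa [hs_def] using norm_pos_iff.2 h
        have step1 : α' j * φ j x =
            ((starRingEnd 𝕜) (φ j x) * φ j x) * ((s j ^ (q - 2) : ℝ) : 𝕜) := by
          rw [hα'_def]; ring
        have hreal : ‖φ j x‖ ^ 2 * s j ^ (q - 2) = s j ^ q := by
          have h2 : ‖φ j x‖ ^ 2 = s j ^ ((2 : ℕ) : ℝ) := by
            rw [Real.rpow_natCast]
          rw [h2, ← Real.rpow_add hs]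
          congr 1
          push_cast
          ring
        rw [step1, RCLike.conj_mul]
        exact_mod_cast hreal
    have hαn : ∀ j, ‖α' j‖ ≤ s j ^ (q - 1) := by
      intro j
      rcases eq_or_ne (φ j x) 0 with h | h
      · simp only [hα'_def, h, map_zero, zero_mul, norm_zero]
        positivity
      · have hs : 0 < s j := by simpa [hs_def] using norm_pos_iff.2 h
        rw [hα'_def]
        simp only [norm_mul, RCLike.norm_conj, RCLike.norm_ofReal]
        rw [abs_of_nonneg (Real.rpow_nonneg hs.le _)]
        have : ‖φ j x‖ = s j ^ (1 : ℝ) := by rw [Real.rpow_one]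
        rw [this, ← Real.rpow_add hs, show (1 : ℝ) + (q - 2) = q - 1 by ring]
    set S := ∑ j, s j ^ q with hS_def
    show S ≤ B ^ q
    have hS0 : 0 ≤ S := Finset.sum_nonneg fun j _ => Real.rpow_nonneg (norm_nonneg _) q
    have hSle : S ≤ ‖∑ j, α' j • φ j‖ := by
      have hSx : ((S : ℝ) : 𝕜) = (∑ j, α' j • φ j) x := by
        rw [ContinuousLinearMap.sum_apply, hS_def]
        push_cast
        refine Finset.sum_congr rfl fun j _ => ?_
        simp only [ContinuousLinearMap.coe_smul', Pi.smul_apply, smul_eq_mul, hαφ j]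
      calc S = ‖((S : ℝ) : 𝕜)‖ := by rw [RCLike.norm_ofReal, abs_of_nonneg hS0]
        _ = ‖(∑ j, α' j • φ j) x‖ := by rw [hSx]
        _ ≤ ‖∑ j, α' j • φ j‖ * ‖x‖ := ContinuousLinearMap.le_opNorm _ x
        _ ≤ ‖∑ j, α' j • φ j‖ * 1 := by
            exact mul_le_mul_of_nonneg_left hx (norm_nonneg _)
        _ = ‖∑ j, α' j • φ j‖ := mul_one _
    by_cases hptop : p = ⊤
    · have hq : q = 1 := htop_q hptop
      have h := hest α'
      rw [if_pos hptop] at h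
      have hsup : (univ.sup fun j => ‖α' j‖₊) ≤ 1 := by
        refine Finset.sup_le fun j _ => ?_
        have := hαn j
        rw [hq] at this
        simp only [sub_self, Real.rpow_zero] at this
        exact_mod_cast this
      have : S ≤ B := by
        calc S ≤ ‖∑ j, α' j • φ j‖ := hSle
          _ ≤ B * ↑(univ.sup fun j => ‖α' j‖₊) := h.2
          _ ≤ B * 1 := by
              refine mul_le_mul_of_nonneg_left ?_ hB.le
              exact_mod_cast hsup
          _ = B := mul_one B
      rw [hq, Real.rpow_one]
      exact this
    · obtain ⟨ht1, hqgt1, hqt, hqt2⟩ := hfin hptop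
      have ht0 : 0 < p.toReal := by linarith
      have h := hest α'
      rw [if_neg hptop] at h
      have h3 : ∑ j, ‖α' j‖ ^ p.toReal ≤ S := by
        refine Finset.sum_le_sum fun j _ => ?_
        calc ‖α' j‖ ^ p.toReal ≤ (s j ^ (q - 1)) ^ p.toReal :=
              Real.rpow_le_rpow (norm_nonneg _) (hαn j) ht0.le
          _ = s j ^ ((q - 1) * p.toReal) := by
              rw [← Real.rpow_mul (norm_nonneg _)]
          _ = s j ^ q := by rw [hqt]
      have h4 : S ^ p.toReal ≤ B ^ p.toReal * S := by
        calc S ^ p.toReal ≤ ‖∑ j, α' j • φ j‖ ^ p.toReal :=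
              Real.rpow_le_rpow hS0 hSle ht0.le
          _ ≤ B ^ p.toReal * ∑ j, ‖α' j‖ ^ p.toReal := h.2
          _ ≤ B ^ p.toReal * S :=
              mul_le_mul_of_nonneg_left h3 (Real.rpow_nonneg hB.le _)
      rcases eq_or_lt_of_le hS0 with hS | hS
      · rw [← hS]
        positivity
      · have h5 : S ^ (p.toReal - 1) ≤ B ^ p.toReal := by
          have hSsplit : S ^ p.toReal = S ^ (p.toReal - 1) * S := by
            rw [← Real.rpow_add_one hS.ne']
            ring_nf
          rw [hSsplit] at h4
          exact le_of_mul_le_mul_right h4 hS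
        have hBq : B ^ p.toReal = (B ^ q) ^ (p.toReal - 1) := by
          rw [← Real.rpow_mul hB.le, hqt2]
        rw [hBq] at h5
        exact aux_rpow_le (p.toReal - 1) (Real.rpow_nonneg hB.le q) (by linarith) h5
  intro α
  set M : ℝ := ↑(Finset.univ.sup fun j => ‖α j‖₊) with hM_def
  have hM0 : 0 ≤ M := NNReal.coe_nonneg _
  have hαM : ∀ j, ‖α j‖ ≤ M := by
    intro j
    rw [hM_def]
    exact_mod_cast Finset.le_sup (f := fun j => ‖α j‖₊) (Finset.mem_univ j)
  -- pointwise upper bound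
  have hupper : ∀ x : E, ‖x‖ ≤ 1 → ‖∑ j, α j * (φ j x) ^ n‖ ≤ B ^ n * M := by
    intro x hx
    have hs_le : ∀ j, ‖φ j x‖ ≤ B := by
      intro j
      calc ‖φ j x‖ ≤ ‖φ j‖ * ‖x‖ := ContinuousLinearMap.le_opNorm _ x
        _ ≤ B * 1 := mul_le_mul (hcoord j) hx (norm_nonneg x) hB.le
        _ = B := mul_one B
    have hterm : ∀ j, ‖φ j x‖ ^ n ≤ ‖φ j x‖ ^ q * B ^ ((n : ℝ) - q) := by
      intro j
      rcases eq_or_lt_of_le (norm_nonneg (φ j x)) with h0 | h0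
      · rw [← h0, zero_pow hn0, Real.zero_rpow hq0.ne', zero_mul]
      · have hsplit : ‖φ j x‖ ^ ((n : ℝ)) = ‖φ j x‖ ^ q * ‖φ j x‖ ^ ((n : ℝ) - q) := by
          rw [← Real.rpow_add h0]
          congr 1
          ring
        rw [← Real.rpow_natCast ‖φ j x‖ n, hsplit]
        refine mul_le_mul_of_nonneg_left ?_ (Real.rpow_nonneg h0.le q)
        exact Real.rpow_le_rpow h0.le (hs_le j) (by linarith)
    calc ‖∑ j, α j * (φ j x) ^ n‖ ≤ ∑ j, ‖α j * (φ j x) ^ n‖ := norm_sum_le _ _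
      _ = ∑ j, ‖α j‖ * ‖φ j x‖ ^ n := by simp [norm_mul, norm_pow]
      _ ≤ ∑ j, M * (‖φ j x‖ ^ q * B ^ ((n : ℝ) - q)) := by
          refine Finset.sum_le_sum fun j _ => ?_
          exact mul_le_mul (hαM j) (hterm j) (pow_nonneg (norm_nonneg _) n) hM0
      _ = M * B ^ ((n : ℝ) - q) * ∑ j, ‖φ j x‖ ^ q := by
          rw [Finset.mul_sum]
          refine Finset.sum_congr rfl fun j _ => ?_
          ring
      _ ≤ M * B ^ ((n : ℝ) - q) * B ^ q := by
          refine mul_le_mul_of_nonneg_left (hdual x hx) ?_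
          positivity
      _ = B ^ n * M := by
          rw [mul_assoc, ← Real.rpow_add hB, sub_add_cancel, Real.rpow_natCast]
          ring
  have hne : Nonempty {x : E // ‖x‖ ≤ 1} := ⟨⟨0, by simp⟩⟩
  have hbdd : BddAbove (Set.range fun x : {x : E // ‖x‖ ≤ 1} =>
      ‖∑ j, α j * (φ j (x : E)) ^ n‖) := by
    refine ⟨B ^ n * M, ?_⟩
    rintro _ ⟨x, rfl⟩
    exact hupper x x.2
  constructor
  · -- lower bound
    rcases eq_or_ne (Finset.univ.sup fun j => ‖α j‖₊) 0 with h0 | h0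
    · have hMz : M = 0 := by rw [hM_def, h0, NNReal.coe_zero]
      rw [hMz, mul_zero]
      exact Real.iSup_nonneg fun x => norm_nonneg _
    · have hk : (Finset.univ : Finset (Fin k)).Nonempty := by
        rcases Finset.eq_empty_or_nonempty (Finset.univ : Finset (Fin k)) with he | hne'
        · rw [he, Finset.sup_empty] at h0
          exact absurd rfl h0
        · exact hne'
      obtain ⟨j₀, -, hj₀⟩ := Finset.exists_mem_eq_sup Finset.univ hk fun j => ‖α j‖₊
      -- key claim: approximate "biorthogonal" vectors exist
      have claim : ∀ ε : ℝ, 0 < ε → ε < A → ∃ x : E, ‖x‖ ≤ 1 ∧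
          (∀ j, j ≠ j₀ → φ j x = 0) ∧ A - ε ≤ ‖φ j₀ x‖ := by
        intro ε hε1 hε2
        classical
        set gl : Fin k → E →ₗ[𝕜] 𝕜 :=
          fun j => if j = j₀ then 0 else (φ j : E →ₗ[𝕜] 𝕜) with hgl
        set N : Submodule 𝕜 E := ⨅ j, LinearMap.ker (gl j) with hN
        set f : N →L[𝕜] 𝕜 := (φ j₀).comp N.subtypeL with hf
        have hAf : A ≤ ‖f‖ := by
          obtain ⟨ψ, hψext, hψnorm⟩ := exists_extension_norm_eq N f
          have hker : (⨅ j, LinearMap.ker (gl j)) ≤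
              LinearMap.ker ((φ j₀ : E →ₗ[𝕜] 𝕜) - (ψ : E →ₗ[𝕜] 𝕜)) := by
            intro x hx
            rw [LinearMap.mem_ker, LinearMap.sub_apply]
            have h1 : ψ x = f ⟨x, hx⟩ := hψext ⟨x, hx⟩
            have h2 : f ⟨x, hx⟩ = φ j₀ x := rfl
            rw [ContinuousLinearMap.coe_coe, ContinuousLinearMap.coe_coe, h1, h2, sub_self]
          obtain ⟨c, hc⟩ := (Submodule.mem_span_range_iff_exists_fun 𝕜).1
            (mem_span_of_iInf_ker_le_ker hker)
          set β : Fin k → 𝕜 := fun j => if j = j₀ then 1 else -c j with hβ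
          have hsumβ : (∑ j, β j • φ j : E →L[𝕜] 𝕜) = ψ := by
            apply ContinuousLinearMap.coe_injective
            have key2 : ∑ j, β j • (φ j : E →ₗ[𝕜] 𝕜) + ∑ j, c j • gl j
                = (φ j₀ : E →ₗ[𝕜] 𝕜) := by
              rw [← Finset.sum_add_distrib]
              have hterm : ∀ j ∈ univ, β j • (φ j : E →ₗ[𝕜] 𝕜) + c j • gl j
                  = if j = j₀ then (φ j₀ : E →ₗ[𝕜] 𝕜) else 0 := by
                intro j _
                by_cases hj : j = j₀
                · subst hj
                  simp [hβ, hgl]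
                · simp only [hβ, hgl, if_neg hj]
                  rw [← add_smul, neg_add_cancel, zero_smul]
              rw [Finset.sum_congr rfl hterm, Finset.sum_ite_eq' univ j₀]
              simp
            rw [hc] at key2
            have hcoe : ((∑ j, β j • φ j : E →L[𝕜] 𝕜) : E →ₗ[𝕜] 𝕜)
                = ∑ j, β j • (φ j : E →ₗ[𝕜] 𝕜) := by
              push_cast
              rfl
            rw [hcoe]
            have hX : ∑ j, β j • (φ j : E →ₗ[𝕜] 𝕜) +
                  ((φ j₀ : E →ₗ[𝕜] 𝕜) - (ψ : E →ₗ[𝕜] 𝕜))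
                = (ψ : E →ₗ[𝕜] 𝕜) + ((φ j₀ : E →ₗ[𝕜] 𝕜) - (ψ : E →ₗ[𝕜] 𝕜)) := by
              rw [key2]
              abel
            exact add_right_cancel hX
          have hβj₀ : ‖β j₀‖ = 1 := by simp [hβ]
          by_cases hptop : p = ⊤
          · have h := hest β
            rw [if_pos hptop] at h
            have h1 := h.1
            rw [hsumβ, hψnorm] at h1
            have hsup1 : (1 : ℝ≥0) ≤ univ.sup fun j => ‖β j‖₊ := by
              have hle := Finset.le_sup (f := fun j => ‖β j‖₊) (Finset.mem_univ j₀)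
              have : ‖β j₀‖₊ = 1 := by
                ext
                simpa using hβj₀
              simpa only [this] using hle
            calc A = A * 1 := (mul_one A).symm
              _ ≤ A * ↑(univ.sup fun j => ‖β j‖₊) := by
                  refine mul_le_mul_of_nonneg_left ?_ hA.le
                  exact_mod_cast hsup1
              _ ≤ ‖f‖ := h1
          · have ht0 : 0 < p.toReal := lt_trans one_pos (hfin hptop).1
            have h := hest β
            rw [if_neg hptop] at h
            have h1 := h.1
            rw [hsumβ, hψnorm] at h1
            have hsum_ge : 1 ≤ ∑ j, ‖β j‖ ^ p.toReal := by
              have hle := Finset.single_le_sum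
                (f := fun j => ‖β j‖ ^ p.toReal)
                (fun j _ => Real.rpow_nonneg (norm_nonneg _) _) (Finset.mem_univ j₀)
              simpa only [hβj₀, Real.one_rpow] using hle
            have hAt : A ^ p.toReal ≤ ‖f‖ ^ p.toReal := by
              calc A ^ p.toReal = A ^ p.toReal * 1 := (mul_one _).symm
                _ ≤ A ^ p.toReal * ∑ j, ‖β j‖ ^ p.toReal :=
                    mul_le_mul_of_nonneg_left hsum_ge (Real.rpow_nonneg hA.le _)
                _ ≤ ‖f‖ ^ p.toReal := h1
            exact aux_rpow_le p.toReal (norm_nonneg f) ht0 hAt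
        have hlt : A - ε < ‖f‖ := by linarith
        obtain ⟨y, hy1, hy2⟩ := f.exists_lt_apply_of_lt_opNorm hlt
        have hfy : f y = φ j₀ (y : E) := rfl
        refine ⟨(y : E), hy1.le, ?_, ?_⟩
        · intro j hj
          have hmem := (Submodule.mem_iInf fun j => LinearMap.ker (gl j)).1 y.2 j
          rw [LinearMap.mem_ker] at hmem
          rw [hgl] at hmem
          simpa [if_neg hj] using hmem
        · rw [← hfy]
          exact hy2.le
      have key : ∀ ε : ℝ, 0 < ε → ε < A →
          ‖α j₀‖ * (A - ε) ^ n ≤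
            ⨆ x : {x : E // ‖x‖ ≤ 1}, ‖∑ j, α j * (φ j (x : E)) ^ n‖ := by
        intro ε h1 h2
        obtain ⟨x, hx1, hx2, hx3⟩ := claim ε h1 h2
        have hcollapse : ∑ j, α j * (φ j x) ^ n = α j₀ * (φ j₀ x) ^ n := by
          refine Finset.sum_eq_single j₀ (fun j _ hj => ?_) (by simp)
          rw [hx2 j hj, zero_pow hn0, mul_zero]
        calc ‖α j₀‖ * (A - ε) ^ n ≤ ‖α j₀‖ * ‖φ j₀ x‖ ^ n := by
              refine mul_le_mul_of_nonneg_left ?_ (norm_nonneg _)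
              exact pow_le_pow_left₀ (by linarith) hx3 n
          _ = ‖∑ j, α j * (φ j x) ^ n‖ := by
              rw [hcollapse, norm_mul, norm_pow]
          _ ≤ _ := le_ciSup hbdd (⟨x, hx1⟩ : {x : E // ‖x‖ ≤ 1})
      -- pass to the limit ε → 0⁺
      have cont : Filter.Tendsto (fun ε : ℝ => ‖α j₀‖ * (A - ε) ^ n)
          (nhdsWithin 0 (Set.Ioi 0)) (nhds (‖α j₀‖ * A ^ n)) := by
        have hca : ContinuousAt (fun ε : ℝ => ‖α j₀‖ * (A - ε) ^ n) 0 := by fun_prop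
        have := hca.tendsto.mono_left
          (nhdsWithin_le_nhds : nhdsWithin (0:ℝ) (Set.Ioi 0) ≤ nhds 0)
        simpa using this
      have ev : ∀ᶠ ε in nhdsWithin (0:ℝ) (Set.Ioi 0),
          ‖α j₀‖ * (A - ε) ^ n ≤
            ⨆ x : {x : E // ‖x‖ ≤ 1}, ‖∑ j, α j * (φ j (x : E)) ^ n‖ := by
        filter_upwards [Ioo_mem_nhdsGT_of_mem (Set.mem_Ico.mpr ⟨le_refl 0, hA⟩)] with ε hε
        exact key ε hε.1 hε.2
      have hfinal := le_of_tendsto cont ev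
      have hM_eq : M = ‖α j₀‖ := by rw [hM_def, hj₀, coe_nnnorm]
      rw [hM_eq]
      calc A ^ n * ‖α j₀‖ = ‖α j₀‖ * A ^ n := by ring
        _ ≤ _ := hfinal
  · -- upper bound
    exact ciSup_le fun x => hupper x x.2
end

section
/- Let E be a Banach space, 1 ≤ p < ∞, and suppose there exist constants A, B > 0 and a sequence (φ_j) in E' such that A^q·∑_{j=1}^k|α_j|^q ≤ ‖∑_{j=1}^k α_j φ_j‖^q ≤ B^q·∑_{j=1}^k|α_j|^q for all k and all scalars, where 1/p + 1/q = 1. Then for every integer n ≥ p, the sequence (φ_j^n) of n-homogeneous polynomials is equivalent to the unit vector basis of c₀: A^n·max_j|α_j| ≤ ‖∑_{j=1}^k α_j φ_j^n‖ ≤ B^n·max_j|α_j| for all k and scalars (α_j). -/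
open scoped ENNReal NNReal
open Finset

lemma dual_sum_le' {𝕜 : Type*} [RCLike 𝕜] {B : ℝ} {k : ℕ} {c : Fin k → 𝕜}
    (hyp : ∀ β : Fin k → 𝕜, (Finset.univ.sup fun j => ‖β j‖₊) ≤ 1 →
      ‖∑ j, β j * c j‖ ≤ B) :
    ∑ j, ‖c j‖ ≤ B := by
  set β : Fin k → 𝕜 := fun j =>
    if c j = 0 then 0 else (starRingEnd 𝕜) (c j) * ((‖c j‖⁻¹ : ℝ) : 𝕜) with hβ
  have hβc : ∀ j, β j * c j = ((‖c j‖ : ℝ) : 𝕜) := by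
    intro j
    by_cases h : c j = 0
    · simp [hβ, h]
    · have hc : (0:ℝ) < ‖c j‖ := norm_pos_iff.2 h
      simp only [hβ, if_neg h]
      rw [mul_comm ((starRingEnd 𝕜) (c j)), mul_assoc, RCLike.conj_mul]
      have hne : ((‖c j‖ : ℝ) : 𝕜) ≠ 0 := by exact_mod_cast hc.ne'
      push_cast
      field_simp
  have hsup : (Finset.univ.sup fun j => ‖β j‖₊) ≤ 1 := by
    apply Finset.sup_le
    intro j _
    by_cases h : c j = 0
    · simp [hβ, h]
    · have hc : (0:ℝ) < ‖c j‖ := norm_pos_iff.2 h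
      have : ‖β j‖ = 1 := by
        simp only [hβ, if_neg h, norm_mul, RCLike.norm_conj, RCLike.norm_ofReal,
          abs_of_nonneg (inv_nonneg.2 hc.le)]
        field_simp
      rw [← NNReal.coe_le_coe, coe_nnnorm, this, NNReal.coe_one]
  have := hyp β hsup
  have hsum : ∑ j, β j * c j = ((∑ j, ‖c j‖ : ℝ) : 𝕜) := by
    rw [Finset.sum_congr rfl fun j _ => hβc j]
    push_cast
    rfl
  rw [hsum] at this
  rwa [RCLike.norm_ofReal, abs_of_nonneg (Finset.sum_nonneg fun j _ => norm_nonneg _)] at this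
lemma dual_sum_rpow_le' {𝕜 : Type*} [RCLike 𝕜] {p qr B : ℝ} (hp : 1 < p) (hqr : 1 < qr)
    (h1 : (p - 1) * qr = p) (hB : 0 < B) {k : ℕ} {c : Fin k → 𝕜}
    (hyp : ∀ β : Fin k → 𝕜, ‖∑ j, β j * c j‖ ^ qr ≤ B ^ qr * ∑ j, ‖β j‖ ^ qr) :
    ∑ j, ‖c j‖ ^ p ≤ B ^ p := by
  have hp0 : (0:ℝ) < p := lt_trans one_pos hp
  have hqr0 : (0:ℝ) < qr := lt_trans one_pos hqr
  set S : ℝ := ∑ j, ‖c j‖ ^ p with hS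
  have hS0 : 0 ≤ S := Finset.sum_nonneg fun j _ => Real.rpow_nonneg (norm_nonneg _) _
  set β : Fin k → 𝕜 := fun j => (starRingEnd 𝕜) (c j) * ((‖c j‖ ^ (p - 2) : ℝ) : 𝕜) with hβ
  have hβc : ∀ j, β j * c j = ((‖c j‖ ^ p : ℝ) : 𝕜) := by
    intro j
    by_cases h : c j = 0
    · simp [hβ, h, Real.zero_rpow hp0.ne']
    · have hc : (0:ℝ) < ‖c j‖ := norm_pos_iff.2 h
      rw [hβ]
      simp only
      rw [mul_comm ((starRingEnd 𝕜) (c j)), mul_assoc, RCLike.conj_mul]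
      rw [← RCLike.ofReal_pow, ← RCLike.ofReal_mul]
      congr 1
      rw [← Real.rpow_natCast (‖c j‖) 2, ← Real.rpow_add hc]
      norm_num
  have hβn : ∀ j, ‖β j‖ ^ qr = ‖c j‖ ^ p := by
    intro j
    by_cases h : c j = 0
    · simp [hβ, h, Real.zero_rpow hqr0.ne', Real.zero_rpow hp0.ne']
    · have hc : (0:ℝ) < ‖c j‖ := norm_pos_iff.2 h
      have hb : ‖β j‖ = ‖c j‖ ^ (p - 1) := by
        rw [hβ]
        simp only [norm_mul, RCLike.norm_conj, RCLike.norm_ofReal,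
          abs_of_nonneg (Real.rpow_nonneg hc.le _)]
        rw [← Real.rpow_one_add' hc.le (by linarith)]
        congr 1
        ring
      rw [hb, ← Real.rpow_mul hc.le, h1]
  have hkey := hyp β
  have hsum : ∑ j, β j * c j = ((S : ℝ) : 𝕜) := by
    rw [Finset.sum_congr rfl fun j _ => hβc j, hS]
    push_cast
    rfl
  rw [hsum, RCLike.norm_ofReal, abs_of_nonneg hS0,
    Finset.sum_congr rfl fun j _ => hβn j, ← hS] at hkey
  -- hkey : S ^ qr ≤ B ^ qr * S
  rcases eq_or_lt_of_le hS0 with hS0' | hSpos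
  · rw [← hS0']
    exact (Real.rpow_pos_of_pos hB p).le
  · have h3 : S ^ (qr - 1) ≤ B ^ qr := by
      have e : S ^ qr = S ^ (qr - 1) * S := by
        rw [← Real.rpow_add_one hSpos.ne' (qr - 1)]
        norm_num
      rw [e] at hkey
      exact le_of_mul_le_mul_right hkey hSpos
    have h4 := Real.rpow_le_rpow (Real.rpow_nonneg hS0 _) h3 (le_of_lt (div_pos hp0 hqr0))
    rw [← Real.rpow_mul hS0, ← Real.rpow_mul hB.le] at h4
    have e1 : (qr - 1) * (p / qr) = 1 := by
      field_simp
      nlinarith [h1]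
    have e2 : qr * (p / qr) = p := by field_simp
    rwa [e1, e2, Real.rpow_one] at h4

set_option maxHeartbeats 1000000

/-- If a sequence `(φ_j)` in `E'` satisfies two-sided `ℓ_q` estimates (with the sup
modification when `q = ∞`), `1/p + 1/q = 1`, `1 ≤ p < ∞`, then for every integer
`n ≥ p` the sequence of `n`-th powers `(φ_j^n)` is equivalent to the unit vector
basis of `c₀`. -/
theorem powers_equivalent_c0_basis
    {𝕜 : Type*} [RCLike 𝕜] {E : Type*} [NormedAddCommGroup E] [NormedSpace 𝕜 E]
    [CompleteSpace E]
    (p : ℝ) (hp : 1 ≤ p) (q : ℝ≥0∞) (hq : 1 ≤ q) (hpq : p⁻¹ + q.toReal⁻¹ = 1)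
    (φ : ℕ → (E →L[𝕜] 𝕜)) (A B : ℝ) (hA : 0 < A) (hB : 0 < B)
    (hest : ∀ (k : ℕ) (α : Fin k → 𝕜),
      if q = ⊤ then
        A * ↑(Finset.univ.sup fun j => ‖α j‖₊) ≤ ‖∑ j, α j • φ j‖ ∧
        ‖∑ j, α j • φ j‖ ≤ B * ↑(Finset.univ.sup fun j => ‖α j‖₊)
      else
        A ^ q.toReal * ∑ j, ‖α j‖ ^ q.toReal ≤ ‖∑ j, α j • φ j‖ ^ q.toReal ∧
        ‖∑ j, α j • φ j‖ ^ q.toReal ≤ B ^ q.toReal * ∑ j, ‖α j‖ ^ q.toReal)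
    (n : ℕ) (hn : p ≤ (n : ℝ)) :
    ∀ (k : ℕ) (α : Fin k → 𝕜),
      A ^ n * ↑(Finset.univ.sup fun j => ‖α j‖₊) ≤
        (⨆ x : {x : E // ‖x‖ ≤ 1}, ‖∑ j, α j * (φ j (x : E)) ^ n‖) ∧
      (⨆ x : {x : E // ‖x‖ ≤ 1}, ‖∑ j, α j * (φ j (x : E)) ^ n‖) ≤
        B ^ n * ↑(Finset.univ.sup fun j => ‖α j‖₊) := by
  have hp0 : (0:ℝ) < p := lt_of_lt_of_le one_pos hp
  have hn1 : 1 ≤ n := by exact_mod_cast hp.trans hn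
  have hn0 : n ≠ 0 := by omega
  have hq_facts : (q = ⊤ ∧ p = 1) ∨
      (q ≠ ⊤ ∧ 1 < p ∧ 1 < q.toReal ∧ (p - 1) * q.toReal = p) := by
    by_cases hqt : q = ⊤
    · left
      refine ⟨hqt, ?_⟩
      rw [hqt] at hpq
      simp only [ENNReal.toReal_top, inv_zero, add_zero] at hpq
      exact inv_eq_one.mp hpq
    · right
      have hqr1' : 1 ≤ q.toReal := by
        have := ENNReal.toReal_mono hqt hq
        simpa using this
      have hqr0 : 0 < q.toReal := lt_of_lt_of_le one_pos hqr1'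
      have hqr1 : 1 < q.toReal := by
        rcases eq_or_lt_of_le hqr1' with he | h
        · exfalso
          rw [← he] at hpq
          have h0 : 0 < p⁻¹ := inv_pos.2 hp0
          simp only [inv_one] at hpq
          linarith
        · exact h
      have hp1 : 1 < p := by
        have h2 : p⁻¹ < 1 := by
          have : 0 < q.toReal⁻¹ := inv_pos.2 hqr0
          linarith
        nlinarith [mul_inv_cancel₀ hp0.ne', hp0]
      have h1 : (p - 1) * q.toReal = p := by
        have hpne : p ≠ 0 := hp0.ne'
        have hqne : q.toReal ≠ 0 := hqr0.ne'
        field_simp at hpq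
        nlinarith [hpq]
      exact ⟨hqt, hp1, hqr1, h1⟩
  intro k α
  -- uniform dual estimate
  have hBp : ∀ x : E, ‖x‖ ≤ 1 → ∑ j : Fin k, ‖φ j x‖ ^ p ≤ B ^ p := by
    intro x hx
    have happly : ∀ β : Fin k → 𝕜, ‖∑ j, β j * φ j x‖ ≤ ‖∑ j, β j • φ j‖ := by
      intro β
      have : ∑ j, β j * φ j x = (∑ j, β j • φ j) x := by
        simp [ContinuousLinearMap.sum_apply]
      rw [this]
      exact (∑ j, β j • φ j).unit_le_opNorm x hx
    rcases hq_facts with ⟨hqt, hp1⟩ | ⟨hqt, hp1, hqr1, h1⟩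
    · rw [hp1]
      simp only [Real.rpow_one]
      apply dual_sum_le'
      intro β hβ
      have h := hest k β
      rw [if_pos hqt] at h
      calc ‖∑ j, β j * φ j x‖ ≤ ‖∑ j, β j • φ j‖ := happly β
        _ ≤ B * ((Finset.univ.sup fun j => ‖β j‖₊ : ℝ≥0) : ℝ) := h.2
        _ ≤ B * 1 := by
            have : ((Finset.univ.sup fun j => ‖β j‖₊ : ℝ≥0) : ℝ) ≤ 1 := by
              exact_mod_cast hβ
            nlinarith
        _ = B := mul_one B
    · apply dual_sum_rpow_le' hp1 hqr1 h1 hB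
      intro β
      have h := hest k β
      rw [if_neg hqt] at h
      calc ‖∑ j, β j * φ j x‖ ^ q.toReal ≤ ‖∑ j, β j • φ j‖ ^ q.toReal :=
            Real.rpow_le_rpow (norm_nonneg _) (happly β) (by linarith)
        _ ≤ B ^ q.toReal * ∑ j, ‖β j‖ ^ q.toReal := h.2
  -- lower norm estimate for coefficient vectors with a coordinate equal to 1
  have hlow : ∀ (γ : Fin k → 𝕜) (j₀ : Fin k), γ j₀ = 1 → A ≤ ‖∑ j, γ j • φ j‖ := by
    intro γ j₀ hγ
    rcases hq_facts with ⟨hqt, hp1⟩ | ⟨hqt, hp1, hqr1, h1⟩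
    · have h := hest k γ
      rw [if_pos hqt] at h
      have hsup : (1:ℝ) ≤ ((Finset.univ.sup fun j => ‖γ j‖₊ : ℝ≥0) : ℝ) := by
        have h0 : ‖γ j₀‖₊ ≤ Finset.univ.sup fun j => ‖γ j‖₊ :=
          Finset.le_sup (f := fun j => ‖γ j‖₊) (Finset.mem_univ j₀)
        have h1 : ‖γ j₀‖₊ = 1 := by rw [hγ]; simp
        rw [h1] at h0
        exact_mod_cast h0
      nlinarith [h.1]
    · have h := hest k γ
      rw [if_neg hqt] at h
      have hqr0 : 0 < q.toReal := lt_trans one_pos hqr1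
      have hsum : (1:ℝ) ≤ ∑ j, ‖γ j‖ ^ q.toReal := by
        have h0 := Finset.single_le_sum (f := fun j => ‖γ j‖ ^ q.toReal)
          (fun j _ => Real.rpow_nonneg (norm_nonneg _) _) (Finset.mem_univ j₀)
        simpa [hγ] using h0
      have h2 : A ^ q.toReal ≤ ‖∑ j, γ j • φ j‖ ^ q.toReal := by
        have hA2 : 0 < A ^ q.toReal := Real.rpow_pos_of_pos hA _
        nlinarith [h.1]
      by_contra hcon
      push_neg at hcon
      have := Real.rpow_lt_rpow (norm_nonneg _) hcon hqr0
      linarith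
  -- n-th power bound
  have hnb : ∀ x : E, ‖x‖ ≤ 1 → ∑ j : Fin k, ‖φ j x‖ ^ n ≤ B ^ n := by
    intro x hx
    have hS := hBp x hx
    have hcB : ∀ j : Fin k, ‖φ j x‖ ≤ B := by
      intro j
      by_contra hcon
      push_neg at hcon
      have h1 : B ^ p < ‖φ j x‖ ^ p := Real.rpow_lt_rpow hB.le hcon hp0
      have h2 : ‖φ j x‖ ^ p ≤ ∑ j' : Fin k, ‖φ j' x‖ ^ p :=
        Finset.single_le_sum (f := fun j' : Fin k => ‖φ j' x‖ ^ p)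
          (fun j' _ => Real.rpow_nonneg (norm_nonneg _) _) (Finset.mem_univ j)
      linarith
    have hterm : ∀ j : Fin k, (‖φ j x‖ : ℝ) ^ n ≤ B ^ ((n:ℝ) - p) * ‖φ j x‖ ^ p := by
      intro j
      have e : ((n:ℝ) - p) + p = (n:ℝ) := by ring
      calc (‖φ j x‖ : ℝ) ^ n = ‖φ j x‖ ^ ((n:ℝ)) := (Real.rpow_natCast _ n).symm
        _ = ‖φ j x‖ ^ (((n:ℝ) - p) + p) := by rw [e]
        _ = ‖φ j x‖ ^ ((n:ℝ) - p) * ‖φ j x‖ ^ p :=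
            Real.rpow_add' (norm_nonneg _) (by rw [e]; positivity)
        _ ≤ B ^ ((n:ℝ) - p) * ‖φ j x‖ ^ p :=
            mul_le_mul_of_nonneg_right
              (Real.rpow_le_rpow (norm_nonneg _) (hcB j) (by linarith))
              (Real.rpow_nonneg (norm_nonneg _) _)
    calc ∑ j : Fin k, ‖φ j x‖ ^ n
        ≤ ∑ j : Fin k, B ^ ((n:ℝ) - p) * ‖φ j x‖ ^ p :=
          Finset.sum_le_sum fun j _ => hterm j
      _ = B ^ ((n:ℝ) - p) * ∑ j : Fin k, ‖φ j x‖ ^ p := by rw [← Finset.mul_sum]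
      _ ≤ B ^ ((n:ℝ) - p) * B ^ p :=
          mul_le_mul_of_nonneg_left hS (Real.rpow_nonneg hB.le _)
      _ = B ^ ((n:ℝ)) := by
          rw [← Real.rpow_add hB]
          congr 1
          ring
      _ = B ^ n := Real.rpow_natCast B n
  set Mr : ℝ := ((Finset.univ.sup fun j => ‖α j‖₊ : ℝ≥0) : ℝ) with hMrdef
  have hMr0 : 0 ≤ Mr := NNReal.coe_nonneg _
  have hαM : ∀ j, ‖α j‖ ≤ Mr := by
    intro j
    have : ‖α j‖₊ ≤ Finset.univ.sup fun j => ‖α j‖₊ :=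
      Finset.le_sup (f := fun j => ‖α j‖₊) (Finset.mem_univ j)
    exact_mod_cast this
  have hub : ∀ x : {x : E // ‖x‖ ≤ 1}, ‖∑ j, α j * (φ j (x : E)) ^ n‖ ≤ B ^ n * Mr := by
    intro x
    calc ‖∑ j, α j * (φ j (x : E)) ^ n‖ ≤ ∑ j : Fin k, ‖α j * (φ j (x : E)) ^ n‖ :=
          norm_sum_le _ _
      _ = ∑ j : Fin k, ‖α j‖ * ‖φ j (x : E)‖ ^ n := by simp [norm_mul, norm_pow]
      _ ≤ ∑ j : Fin k, Mr * ‖φ j (x : E)‖ ^ n :=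
          Finset.sum_le_sum fun j _ =>
            mul_le_mul_of_nonneg_right (hαM j) (pow_nonneg (norm_nonneg _) _)
      _ = Mr * ∑ j : Fin k, ‖φ j (x : E)‖ ^ n := by rw [← Finset.mul_sum]
      _ ≤ Mr * B ^ n := mul_le_mul_of_nonneg_left (hnb x x.2) hMr0
      _ = B ^ n * Mr := mul_comm _ _
  haveI hne : Nonempty {x : E // ‖x‖ ≤ 1} := ⟨⟨0, by simp⟩⟩
  have hbdd : BddAbove (Set.range fun x : {x : E // ‖x‖ ≤ 1} =>
      ‖∑ j, α j * (φ j (x : E)) ^ n‖) := by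
    refine ⟨B ^ n * Mr, ?_⟩
    rintro _ ⟨x, rfl⟩
    exact hub x
  refine ⟨?_, ciSup_le hub⟩
  -- lower bound
  by_contra hcon
  push_neg at hcon
  set L : ℝ := ⨆ x : {x : E // ‖x‖ ≤ 1}, ‖∑ j, α j * (φ j (x : E)) ^ n‖ with hLdef
  have hL0 : 0 ≤ L := le_trans (norm_nonneg _) (le_ciSup hbdd ⟨0, by simp⟩)
  have hMrpos : 0 < Mr := by
    rcases eq_or_lt_of_le hMr0 with he | h
    · exfalso
      rw [← he, mul_zero] at hcon
      exact absurd hL0 (not_le.2 hcon)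
    · exact h
  have hufin : (Finset.univ : Finset (Fin k)).Nonempty := by
    rcases isEmpty_or_nonempty (Fin k) with hemp | hnemp
    · exfalso
      rw [hMrdef] at hMrpos
      rw [Finset.univ_eq_empty] at hMrpos
      simp at hMrpos
    · exact Finset.univ_nonempty
  obtain ⟨j₀, -, hj₀⟩ := Finset.exists_mem_eq_sup Finset.univ hufin (fun j => ‖α j‖₊)
  have hMj : Mr = ‖α j₀‖ := by
    rw [hMrdef, hj₀]
    exact coe_nnnorm _
  set Lm : {j : Fin k // j ≠ j₀} → E →ₗ[𝕜] 𝕜 :=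
    fun j => (φ ((j : Fin k) : ℕ) : E →ₗ[𝕜] 𝕜) with hLm
  set N : Submodule 𝕜 E := ⨅ j, LinearMap.ker (Lm j) with hNdef
  have hNmem : ∀ (y : E), y ∈ N → ∀ j : Fin k, j ≠ j₀ → φ j y = 0 := by
    intro y hy j hj
    have h0 := (Submodule.mem_iInf _).1 hy ⟨j, hj⟩
    exact h0
  set f : N →L[𝕜] 𝕜 := (φ ((j₀ : Fin k) : ℕ)).comp N.subtypeL with hfdef
  obtain ⟨g, hg, hgn⟩ := exists_extension_norm_eq N f
  have hker : (⨅ j, LinearMap.ker (Lm j)) ≤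
      LinearMap.ker ((φ ((j₀ : Fin k) : ℕ) : E →ₗ[𝕜] 𝕜) - (g : E →ₗ[𝕜] 𝕜)) := by
    intro y hy
    rw [LinearMap.mem_ker, LinearMap.sub_apply]
    have hgy : g y = φ ((j₀ : Fin k) : ℕ) y := by
      have h0 := hg ⟨y, hy⟩
      simpa [hfdef] using h0
    simp [hgy]
  have hsp := mem_span_of_iInf_ker_le_ker hker
  obtain ⟨c, hc⟩ := (Submodule.mem_span_range_iff_exists_fun 𝕜).1 hsp
  set γ : Fin k → 𝕜 := fun j => if h : j = j₀ then 1 else - c ⟨j, h⟩ with hγdef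
  have hγsum : (∑ j, γ j • φ j) = g := by
    ext y
    have happ : ∑ i : {j : Fin k // j ≠ j₀}, c i * φ (((i : Fin k)) : ℕ) y =
        φ ((j₀ : Fin k) : ℕ) y - g y := by
      have h0 := congrArg (fun (T : E →ₗ[𝕜] 𝕜) => T y) hc
      simpa [hLm, LinearMap.sum_apply, LinearMap.smul_apply, smul_eq_mul] using h0
    rw [ContinuousLinearMap.sum_apply]
    rw [← Finset.add_sum_erase _ _ (Finset.mem_univ j₀)]
    have hsub : ∑ j ∈ Finset.univ.erase j₀, (γ j • φ j) y =
        ∑ i : {j : Fin k // j ≠ j₀}, (γ (i : Fin k) • φ (((i : Fin k)) : ℕ)) y := by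
      refine Finset.sum_subtype _ (fun x => ?_) _
      simp [Finset.mem_erase]
    rw [hsub]
    have hterm : ∀ i : {j : Fin k // j ≠ j₀},
        (γ (i : Fin k) • φ (((i : Fin k)) : ℕ)) y = - (c i * φ (((i : Fin k)) : ℕ) y) := by
      intro i
      rw [ContinuousLinearMap.smul_apply, smul_eq_mul, hγdef]
      simp only [dif_neg i.2]
      ring
    rw [Finset.sum_congr rfl fun i _ => hterm i, Finset.sum_neg_distrib, happ]
    have hγj₀ : γ j₀ = 1 := by rw [hγdef]; simp
    rw [hγj₀]
    simp
  have hAg : A ≤ ‖g‖ := by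
    have h0 := hlow γ j₀ (by rw [hγdef]; simp)
    rwa [hγsum] at h0
  have hAf : A ≤ ‖f‖ := by rwa [hgn] at hAg
  have hLM : L / Mr < A ^ n := by
    rw [div_lt_iff₀ hMrpos]
    calc L < A ^ n * Mr := hcon
      _ = A ^ n * Mr := rfl
  have ht0 : (0:ℝ) ≤ (L / Mr) ^ ((n:ℝ)⁻¹) := Real.rpow_nonneg (div_nonneg hL0 hMrpos.le) _
  set t : ℝ := (L / Mr) ^ ((n:ℝ)⁻¹) with htdef
  have htn : t ^ n = L / Mr := by
    rw [htdef, ← Real.rpow_natCast ((L / Mr) ^ ((n:ℝ)⁻¹)) n,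
      ← Real.rpow_mul (div_nonneg hL0 hMrpos.le),
      inv_mul_cancel₀ (by exact_mod_cast hn0 : (n:ℝ) ≠ 0), Real.rpow_one]
  have htA : t < A := by
    by_contra hcon2
    push_neg at hcon2
    have h0 := pow_le_pow_left₀ hA.le hcon2 n
    rw [htn] at h0
    linarith
  have hfy : ∀ y : N, ‖y‖ ≤ 1 → ‖f y‖ ≤ t := by
    intro y hy
    have hy1 : ‖((y : E))‖ ≤ 1 := hy
    have hval := le_ciSup hbdd (⟨(y : E), hy1⟩ : {x : E // ‖x‖ ≤ 1})
    have hv : ∑ j, α j * (φ j ((y : E))) ^ n = α j₀ * (f y) ^ n := by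
      rw [Finset.sum_eq_single j₀]
      · congr 2
      · intro j _ hj
        rw [hNmem (y : E) y.2 j hj]
        simp [zero_pow hn0]
      · intro h
        exact absurd (Finset.mem_univ _) h
    rw [show ((⟨(y : E), hy1⟩ : {x : E // ‖x‖ ≤ 1}) : E) = (y : E) from rfl] at hval
    rw [hv] at hval
    rw [norm_mul, norm_pow, ← hMj] at hval
    -- hval : Mr * ‖f y‖ ^ n ≤ L
    have h1 : ‖f y‖ ^ n ≤ t ^ n := by
      rw [htn]
      rw [le_div_iff₀ hMrpos]
      linarith [hval]
    by_contra hcon2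
    push_neg at hcon2
    have := pow_lt_pow_left₀ hcon2 ht0 hn0
    linarith
  have hft : ‖f‖ ≤ t := by
    refine f.opNorm_le_bound ht0 (fun y => ?_)
    rcases eq_or_ne y 0 with rfl | hy0
    · simp
    · have hny : (0:ℝ) < ‖y‖ := norm_pos_iff.2 hy0
      set z : N := (((‖y‖⁻¹ : ℝ) : 𝕜)) • y with hzdef
      have hz1 : ‖z‖ ≤ 1 := by
        rw [hzdef, norm_smul]
        simp only [RCLike.norm_ofReal, abs_of_nonneg (inv_nonneg.2 hny.le)]
        rw [inv_mul_cancel₀ hny.ne']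
      have hfz := hfy z hz1
      have hyz : y = (((‖y‖ : ℝ) : 𝕜)) • z := by
        rw [hzdef, smul_smul, ← RCLike.ofReal_mul, mul_inv_cancel₀ hny.ne']
        simp
      calc ‖f y‖ = ‖f ((((‖y‖ : ℝ) : 𝕜)) • z)‖ := by rw [← hyz]
        _ = ‖y‖ * ‖f z‖ := by
            rw [map_smul, norm_smul, RCLike.norm_ofReal, abs_of_nonneg hny.le]
        _ ≤ ‖y‖ * t := mul_le_mul_of_nonneg_left hfz hny.le
        _ = t * ‖y‖ := mul_comm _ _
  linarith
end

section
/- Let E be a k-dimensional Banach space with Banach–Mazur distance d(E, ℓ_p^k) ≤ C for some 1 ≤ p < ∞ and C ≥ 1. Then for every integer n ≥ p, the space P(ⁿE) of n-homogeneous polynomials on E contains a k-dimensional subspace F with d(F, ℓ_∞^k) ≤ C^n. -/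
open scoped ENNReal NNReal
open Finset

section Aux

variable {𝕜 : Type*} [RCLike 𝕜] {k : ℕ} (p : ℝ≥0∞) [Fact (1 ≤ p)]

lemma aux_sum_q_eq (hp : p ≠ ⊤) (y : PiLp p (fun _ : Fin k => 𝕜)) :
    ∑ j, ‖y j‖ ^ p.toReal = ‖y‖ ^ p.toReal := by
  have hq : 0 < p.toReal := ENNReal.toReal_pos
    (by exact_mod_cast (lt_of_lt_of_le zero_lt_one (Fact.out : 1 ≤ p)).ne') hp
  rw [PiLp.norm_eq_sum hq,
    ← Real.rpow_mul (Finset.sum_nonneg fun i _ => Real.rpow_nonneg (norm_nonneg _) _),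
    one_div, inv_mul_cancel₀ hq.ne', Real.rpow_one]

lemma aux_coord_le (hp : p ≠ ⊤) (y : PiLp p (fun _ : Fin k => 𝕜)) (i : Fin k) :
    ‖y i‖ ≤ ‖y‖ := by
  have hq : 0 < p.toReal := ENNReal.toReal_pos
    (by exact_mod_cast (lt_of_lt_of_le zero_lt_one (Fact.out : 1 ≤ p)).ne') hp
  have h1 : ‖y i‖ ^ p.toReal ≤ ‖y‖ ^ p.toReal := by
    rw [← aux_sum_q_eq p hp y]
    exact Finset.single_le_sum (fun j _ => Real.rpow_nonneg (norm_nonneg _) _)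
      (Finset.mem_univ i)
  have := Real.rpow_le_rpow (Real.rpow_nonneg (norm_nonneg _) _) h1 (le_of_lt (by positivity : (0:ℝ) < 1 / p.toReal))
  rwa [← Real.rpow_mul (norm_nonneg _), ← Real.rpow_mul (norm_nonneg _),
    mul_one_div_cancel hq.ne', Real.rpow_one, Real.rpow_one] at this

lemma aux_sum_pow_le (hp : p ≠ ⊤) (n : ℕ) (hn : p.toReal ≤ (n : ℝ))
    (y : PiLp p (fun _ : Fin k => 𝕜)) :
    ∑ j, ‖y j‖ ^ n ≤ ‖y‖ ^ n := by
  have hq : 0 < p.toReal := ENNReal.toReal_pos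
    (by exact_mod_cast (lt_of_lt_of_le zero_lt_one (Fact.out : 1 ≤ p)).ne') hp
  set q := p.toReal with hqdef
  have hnq : (0:ℝ) < n := lt_of_lt_of_le hq hn
  have hsplit : ∀ z : ℝ, 0 ≤ z → z ^ n = z ^ q * z ^ ((n : ℝ) - q) := by
    intro z hz
    rw [← Real.rpow_natCast z n, ← Real.rpow_add' hz (ne_of_gt (by linarith : (0:ℝ) < q + ((n:ℝ) - q)))]
    have h : q + ((n:ℝ) - q) = (n : ℝ) := by ring
    rw [h]
  calc ∑ j, ‖y j‖ ^ n = ∑ j, ‖y j‖ ^ q * ‖y j‖ ^ ((n:ℝ) - q) := by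
        refine Finset.sum_congr rfl fun j _ => hsplit _ (norm_nonneg _)
    _ ≤ ∑ j, ‖y j‖ ^ q * ‖y‖ ^ ((n:ℝ) - q) := by
        refine Finset.sum_le_sum fun j _ => mul_le_mul_of_nonneg_left
          (Real.rpow_le_rpow (norm_nonneg _) (aux_coord_le p hp y j) (by linarith))
          (Real.rpow_nonneg (norm_nonneg _) _)
    _ = (∑ j, ‖y j‖ ^ q) * ‖y‖ ^ ((n:ℝ) - q) := by rw [← Finset.sum_mul]
    _ = ‖y‖ ^ q * ‖y‖ ^ ((n:ℝ) - q) := by rw [aux_sum_q_eq p hp y]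
    _ = ‖y‖ ^ n := (hsplit _ (norm_nonneg _)).symm

end Aux

/-- Corollary 2: if `E` is a `k`-dimensional Banach space with Banach–Mazur distance
at most `C` from `ℓ_p^k`, then for `n ≥ p` the space of `n`-homogeneous polynomials
on `E` contains a `k`-dimensional subspace (spanned by `n`-th powers of functionals)
at Banach–Mazur distance at most `C^n` from `ℓ_∞^k`. -/
theorem polynomials_contain_linfty_of_banach_mazur
    {𝕜 : Type*} [RCLike 𝕜] {E : Type*} [NormedAddCommGroup E] [NormedSpace 𝕜 E]
    (k : ℕ) (hk : Module.finrank 𝕜 E = k)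
    (p : ℝ≥0∞) [Fact (1 ≤ p)] (hp : p ≠ ⊤)
    (C : ℝ) (hC : 1 ≤ C)
    (hd : ∃ T : E ≃L[𝕜] PiLp p (fun _ : Fin k => 𝕜),
      ‖(T : E →L[𝕜] PiLp p (fun _ : Fin k => 𝕜))‖ *
        ‖(T.symm : PiLp p (fun _ : Fin k => 𝕜) →L[𝕜] E)‖ ≤ C)
    (n : ℕ) (hn : p.toReal ≤ (n : ℝ)) :
    ∃ φ : Fin k → (E →L[𝕜] 𝕜),
      LinearIndependent 𝕜 (fun j => fun x : E => (φ j x) ^ n) ∧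
      ∃ a b : ℝ, 0 < a ∧ b ≤ C ^ n * a ∧
        ∀ α : Fin k → 𝕜,
          a * ↑(Finset.univ.sup fun j => ‖α j‖₊) ≤
            (⨆ x : {x : E // ‖x‖ ≤ 1}, ‖∑ j, α j * (φ j (x : E)) ^ n‖) ∧
          (⨆ x : {x : E // ‖x‖ ≤ 1}, ‖∑ j, α j * (φ j (x : E)) ^ n‖) ≤
            b * ↑(Finset.univ.sup fun j => ‖α j‖₊) := by
  classical
  obtain ⟨T, hT⟩ := hd
  have hq1 : (1:ℝ) ≤ p.toReal := by
    have h1 : (1:ℝ≥0∞) ≤ p := Fact.out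
    calc (1:ℝ) = (1:ℝ≥0∞).toReal := by simp
    _ ≤ p.toReal := ENNReal.toReal_mono hp h1
  have hn1 : 1 ≤ n := by exact_mod_cast hq1.trans hn
  have hn0 : n ≠ 0 := by omega
  rcases Nat.eq_zero_or_pos k with rfl | hk0
  · refine ⟨fun j => j.elim0, linearIndependent_empty_type, 1, C ^ n, one_pos,
      by simpa using one_le_pow₀ hC, ?_⟩
    intro α
    haveI : Nonempty {x : E // ‖x‖ ≤ 1} := ⟨⟨0, by simp⟩⟩
    have hz : (⨆ x : {x : E // ‖x‖ ≤ 1}, ‖∑ j : Fin 0, α j * ((j.elim0 : E →L[𝕜] 𝕜) (x : E)) ^ n‖) = 0 := by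
      simp [ciSup_const]
    constructor
    · rw [hz]; simp
    · rw [hz]; positivity
  haveI : Nonempty (Fin k) := Fin.pos_iff_nonempty.mp hk0
  set Tc : E →L[𝕜] PiLp p (fun _ : Fin k => 𝕜) := (T : E →L[𝕜] PiLp p (fun _ : Fin k => 𝕜)) with hTc
  set Ts : PiLp p (fun _ : Fin k => 𝕜) →L[𝕜] E := (T.symm : PiLp p (fun _ : Fin k => 𝕜) →L[𝕜] E) with hTs
  set M : ℝ := ‖Tc‖ with hM
  set M' : ℝ := ‖Ts‖ with hM'
  set φ : Fin k → (E →L[𝕜] 𝕜) := fun j => (PiLp.proj p (fun _ : Fin k => 𝕜) j).comp Tc with hφdef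
  have hφ : ∀ j x, φ j x = T x j := fun j x => rfl
  -- value at T.symm of a single
  have hsingle : ∀ (i j : Fin k) (c : 𝕜),
      φ j (T.symm ((WithLp.equiv p (∀ _ : Fin k, 𝕜)).symm (Pi.single i c))) = if j = i then c else 0 := by
    intro i j c
    rw [hφ, T.apply_symm_apply, WithLp.equiv_symm_apply, PiLp.toLp_apply]
    by_cases h : j = i
    · subst h; simp
    · rw [if_neg h]; simp [Pi.single_eq_of_ne h]
  have hMpos : 0 ≤ M := norm_nonneg _
  -- positivity of M'
  have hM'pos : 0 < M' := by
    set e := (WithLp.equiv p (∀ _ : Fin k, 𝕜)).symm (Pi.single (Classical.arbitrary (Fin k)) (1:𝕜)) with he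
    have hne : ‖e‖ = 1 := by rw [he, WithLp.equiv_symm_apply, PiLp.norm_toLp_single]; simp
    have hz : T.symm e ≠ 0 := by
      intro h0
      have : e = 0 := by
        have := congrArg T h0
        rwa [T.apply_symm_apply, map_zero] at this
      rw [this, norm_zero] at hne; norm_num at hne
    have h1 : 0 < ‖T.symm e‖ := norm_pos_iff.mpr hz
    have h2 : ‖T.symm e‖ ≤ M' * ‖e‖ := Ts.le_opNorm e
    rw [hne, mul_one] at h2
    linarith
  refine ⟨φ, ?_, (M' ^ n)⁻¹, M ^ n, by positivity, ?_, ?_⟩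
  · -- linear independence
    rw [Fintype.linearIndependent_iff]
    intro g hg i
    have := congrFun hg (T.symm ((WithLp.equiv p (∀ _ : Fin k, 𝕜)).symm (Pi.single i 1)))
    simp only [Finset.sum_apply, Pi.smul_apply, smul_eq_mul, Pi.zero_apply, hsingle] at this
    rwa [Fintype.sum_eq_single i (fun j hj => by
        rw [if_neg hj, zero_pow hn0, mul_zero]), if_pos rfl, one_pow, mul_one] at this
  · -- b ≤ C^n * a
    rw [← div_eq_mul_inv, le_div_iff₀ (by positivity), ← mul_pow]
    exact pow_le_pow_left₀ (by positivity) hT n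
  · intro α
    set mα : ℝ := ((Finset.univ.sup fun j => ‖α j‖₊ : ℝ≥0) : ℝ) with hmα
    have hmα0 : 0 ≤ mα := NNReal.coe_nonneg _
    -- pointwise upper bound
    have upper : ∀ x : E, ‖x‖ ≤ 1 → ‖∑ j, α j * (φ j x) ^ n‖ ≤ M ^ n * mα := by
      intro x hx
      have hTx : ‖T x‖ ≤ M := by
        have := Tc.le_opNorm x
        calc ‖T x‖ = ‖Tc x‖ := rfl
        _ ≤ M * ‖x‖ := this
        _ ≤ M * 1 := by exact mul_le_mul_of_nonneg_left hx hMpos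
        _ = M := mul_one M
      calc ‖∑ j, α j * (φ j x) ^ n‖ ≤ ∑ j, ‖α j‖ * ‖T x j‖ ^ n := by
            refine (norm_sum_le _ _).trans (le_of_eq (Finset.sum_congr rfl fun j _ => ?_))
            rw [norm_mul, norm_pow, hφ]
      _ ≤ ∑ j, mα * ‖T x j‖ ^ n := by
            refine Finset.sum_le_sum fun j _ => mul_le_mul_of_nonneg_right ?_ (by positivity)
            exact_mod_cast Finset.le_sup (f := fun j => ‖α j‖₊) (Finset.mem_univ j)
      _ = mα * ∑ j, ‖T x j‖ ^ n := by rw [Finset.mul_sum]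
      _ ≤ mα * ‖T x‖ ^ n := mul_le_mul_of_nonneg_left (aux_sum_pow_le p hp n hn (T x)) hmα0
      _ ≤ mα * M ^ n := mul_le_mul_of_nonneg_left (pow_le_pow_left₀ (norm_nonneg _) hTx n) hmα0
      _ = M ^ n * mα := mul_comm _ _
    haveI : Nonempty {x : E // ‖x‖ ≤ 1} := ⟨⟨0, by simp⟩⟩
    have hbdd : BddAbove (Set.range fun x : {x : E // ‖x‖ ≤ 1} => ‖∑ j, α j * (φ j (x : E)) ^ n‖) := by
      refine ⟨M ^ n * mα, ?_⟩
      rintro r ⟨x, rfl⟩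
      exact upper x x.2
    constructor
    · -- lower bound
      obtain ⟨j0, _, hj0⟩ := Finset.exists_mem_eq_sup Finset.univ Finset.univ_nonempty
        (fun j => ‖α j‖₊)
      set e := (WithLp.equiv p (∀ _ : Fin k, 𝕜)).symm (Pi.single j0 (1:𝕜)) with he
      have hne : ‖e‖ = 1 := by rw [he, WithLp.equiv_symm_apply, PiLp.norm_toLp_single]; simp
      set z : E := T.symm e with hzdef
      have hz : z ≠ 0 := by
        intro h0
        have : e = 0 := by
          have := congrArg T h0
          rwa [T.apply_symm_apply, map_zero] at this
        rw [this, norm_zero] at hne; norm_num at hne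
      have hznorm : 0 < ‖z‖ := norm_pos_iff.mpr hz
      have hzM : ‖z‖ ≤ M' := by
        have h2 : ‖z‖ ≤ M' * ‖e‖ := Ts.le_opNorm e
        rwa [hne, mul_one] at h2
      set x0 : E := ((‖z‖ : 𝕜))⁻¹ • z with hx0def
      have hx0 : ‖x0‖ ≤ 1 := by
        rw [hx0def, norm_smul, norm_inv, RCLike.norm_ofReal, abs_of_pos hznorm,
          inv_mul_cancel₀ hznorm.ne']
      have hval : ∀ j, φ j x0 = (‖z‖ : 𝕜)⁻¹ * (if j = j0 then 1 else 0) := by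
        intro j
        rw [hφ, hx0def, map_smul]
        have : (T z) j = if j = j0 then (1:𝕜) else 0 := by
          rw [hzdef, T.apply_symm_apply, he, WithLp.equiv_symm_apply, PiLp.toLp_apply]
          by_cases h : j = j0
          · subst h; simp
          · rw [if_neg h]; simp [Pi.single_eq_of_ne h]
        calc ((‖z‖ : 𝕜)⁻¹ • T z) j = (‖z‖ : 𝕜)⁻¹ * (T z) j := rfl
        _ = (‖z‖ : 𝕜)⁻¹ * (if j = j0 then 1 else 0) := by rw [this]
      have hsum : ∑ j, α j * (φ j x0) ^ n = α j0 * ((‖z‖ : 𝕜)⁻¹) ^ n := by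
        rw [Fintype.sum_eq_single j0 (fun j hj => by
          rw [hval j, if_neg hj, mul_zero, zero_pow hn0, mul_zero])]
        rw [hval j0, if_pos rfl, mul_one]
      have hnormval : ‖∑ j, α j * (φ j x0) ^ n‖ = ‖α j0‖ * (‖z‖⁻¹) ^ n := by
        rw [hsum, norm_mul, norm_pow, norm_inv, RCLike.norm_ofReal, abs_of_pos hznorm]
      have hkey : (M' ^ n)⁻¹ * mα ≤ ‖∑ j, α j * (φ j x0) ^ n‖ := by
        rw [hnormval, hmα, hj0]
        have h1 : (M' ^ n)⁻¹ ≤ (‖z‖⁻¹) ^ n := by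
          rw [← inv_pow]
          exact pow_le_pow_left₀ (by positivity) (inv_anti₀ hznorm hzM) n
        calc (M' ^ n)⁻¹ * (‖α j0‖₊ : ℝ) ≤ (‖z‖⁻¹) ^ n * (‖α j0‖₊ : ℝ) :=
              mul_le_mul_of_nonneg_right h1 (NNReal.coe_nonneg _)
        _ = ‖α j0‖ * (‖z‖⁻¹) ^ n := by rw [mul_comm]; norm_num
      exact hkey.trans (le_ciSup hbdd (⟨x0, hx0⟩ : {x : E // ‖x‖ ≤ 1}))
    · exact ciSup_le fun x => upper x x.2
end

section
/- Let E be a Banach space and let φ, ψ ∈ E'. If ‖αφ + βψ‖ ≥ A·(|α|^p + |β|^p)^{1/p} for all scalars α, β, with 1 < p ≤ ∞ and A > 0, then there exists a sequence (x_m) in the unit ball of E with φ(x_m) → A and ψ(x_m) → 0. -/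
/-!
The set `S = {(φ x, ψ x) : ‖x‖ ≤ 1} ⊆ 𝕜²` is convex. If `(A, 0)` were not in its closure, Hahn–Banach
would give a functional `(a, b) ↦ c₁ a + c₂ b` whose real part is `< u` on `S` but `> u` at
`(A, 0)`. The first condition says `‖c₁ φ + c₂ ψ‖ ≤ u`, the second `A · re c₁ > u`, while the lower
`ℓ_p` estimate gives `A · re c₁ ≤ A ‖(c₁, c₂)‖_p ≤ ‖c₁ φ + c₂ ψ‖`.
-/

open scoped ENNReal NNReal
open Filter Topology Metric RCLike ContinuousLinearMap

section

variable {𝕜 E F : Type*} [RCLike 𝕜] [NormedAddCommGroup E] [NormedSpace 𝕜 E]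
  [NormedAddCommGroup F] [NormedSpace 𝕜 F] [NormedSpace ℝ F] [IsScalarTower ℝ 𝕜 F]

theorem convex_image_closedBall (L : E →L[𝕜] F) : Convex ℝ (L '' closedBall 0 1) := by
  let _ := NormedSpace.restrictScalars ℝ 𝕜 E
  exact (convex_closedBall 0 1).linear_image (L.toLinearMap.restrictScalars ℝ)

theorem StrongDual.norm_le_of_forall_re_le {f : StrongDual 𝕜 E} {u : ℝ}
    (hf : ∀ x ∈ closedBall (0 : E) 1, re (f x) ≤ u) : ‖f‖ ≤ u := by
  have hu : 0 ≤ u := by simpa using hf 0 (mem_closedBall_self zero_le_one)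
  refine f.opNorm_le_of_unit_norm hu fun x hx => ?_
  obtain ⟨c, hc, hcx⟩ := exists_norm_eq_mul_self (f x)
  calc ‖f x‖ = re (f (c • x)) := by rw [map_smul, smul_eq_mul, ← hcx, ofReal_re]
    _ ≤ u := hf _ (by simp [norm_smul, hc, hx])

theorem mem_closure_image_closedBall_of_forall_re_le {L : E →L[𝕜] F} {z : F}
    (hz : ∀ g : StrongDual 𝕜 F, re (g z) ≤ ‖g ∘L L‖) : z ∈ closure (L '' closedBall 0 1) := by
  by_contra hzS
  obtain ⟨g, u, hgS, hgz⟩ := RCLike.geometric_hahn_banach_closed_point (𝕜 := 𝕜)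
    (convex_image_closedBall L).closure isClosed_closure hzS
  have hgL : ‖g ∘L L‖ ≤ u := StrongDual.norm_le_of_forall_re_le fun x hx =>
    (hgS _ (subset_closure (Set.mem_image_of_mem L hx))).le
  linarith [hz g]

theorem StrongDual.comp_prod_eq_smul_add_smul (g : StrongDual 𝕜 (𝕜 × 𝕜)) (φ ψ : StrongDual 𝕜 E) :
    g ∘L φ.prod ψ = g (1, 0) • φ + g (0, 1) • ψ := by
  ext x
  have hx : (φ x, ψ x) = φ x • ((1 : 𝕜), (0 : 𝕜)) + ψ x • ((0 : 𝕜), (1 : 𝕜)) := by simp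
  simp only [comp_apply, prod_apply, hx, map_add, map_smul, smul_eq_mul, add_apply, smul_apply]
  ring

end

noncomputable def lpNormPair (p : ℝ≥0∞) (a b : ℝ) : ℝ :=
  if p = ⊤ then max a b else (a ^ p.toReal + b ^ p.toReal) ^ p.toReal⁻¹

theorem le_lpNormPair_left {p : ℝ≥0∞} (hp : p ≠ 0) {a b : ℝ} (ha : 0 ≤ a) (hb : 0 ≤ b) :
    a ≤ lpNormPair p a b := by
  unfold lpNormPair
  split_ifs with htop
  · exact le_max_left a b
  · have hp' : 0 < p.toReal := ENNReal.toReal_pos hp htop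
    calc a = (a ^ p.toReal) ^ p.toReal⁻¹ := (Real.rpow_rpow_inv ha hp'.ne').symm
      _ ≤ (a ^ p.toReal + b ^ p.toReal) ^ p.toReal⁻¹ := by
        gcongr
        exact le_add_of_nonneg_right (Real.rpow_nonneg hb _)

theorem exists_seq_of_lower_lp_estimate_pair_general
    {𝕜 : Type*} [RCLike 𝕜] {E : Type*} [NormedAddCommGroup E] [NormedSpace 𝕜 E]
    (φ ψ : E →L[𝕜] 𝕜) (p : ℝ≥0∞) (hp : 1 < p) (A : ℝ) (hA : 0 < A)
    (hlb : ∀ α β : 𝕜,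
      A * (if p = ⊤ then max ‖α‖ ‖β‖
        else (‖α‖ ^ p.toReal + ‖β‖ ^ p.toReal) ^ (p.toReal⁻¹)) ≤ ‖α • φ + β • ψ‖) :
    ∃ x : ℕ → E, (∀ m, ‖x m‖ ≤ 1) ∧
      Tendsto (fun m => φ (x m)) atTop (𝓝 (A : 𝕜)) ∧
      Tendsto (fun m => ψ (x m)) atTop (𝓝 0) := by
  have hmem : ((A : 𝕜), (0 : 𝕜)) ∈ closure (φ.prod ψ '' closedBall 0 1) := by
    refine mem_closure_image_closedBall_of_forall_re_le fun g => ?_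
    rw [StrongDual.comp_prod_eq_smul_add_smul]
    have hA1 : ((A : 𝕜), (0 : 𝕜)) = (A : 𝕜) • ((1 : 𝕜), (0 : 𝕜)) := by
      rw [Prod.smul_mk, smul_eq_mul, mul_one, smul_zero]
    calc re (g (A, 0)) = A * re (g (1, 0)) := by rw [hA1, map_smul, smul_eq_mul, re_ofReal_mul]
      _ ≤ A * lpNormPair p ‖g (1, 0)‖ ‖g (0, 1)‖ := by
        gcongr
        exact (re_le_norm _).trans <|
          le_lpNormPair_left (zero_lt_one.trans hp).ne' (norm_nonneg _) (norm_nonneg _)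
      _ ≤ _ := hlb _ _
  obtain ⟨y, hy, hlim⟩ := mem_closure_iff_seq_limit.mp hmem
  choose x hx hxy using hy
  refine ⟨x, fun m => mem_closedBall_zero_iff.mp (hx m), ?_, ?_⟩
  · simpa [← hxy] using hlim.fst_nhds
  · simpa [← hxy] using hlim.snd_nhds

/-- The key separation step: a lower `ℓ_p` estimate for a pair `(φ, ψ)` in `E'`
yields a sequence in the unit ball on which `φ → A` and `ψ → 0`. -/
theorem exists_seq_of_lower_lp_estimate_pair
    {𝕜 : Type*} [RCLike 𝕜] {E : Type*} [NormedAddCommGroup E] [NormedSpace 𝕜 E]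
    [CompleteSpace E]
    (φ ψ : E →L[𝕜] 𝕜) (p : ℝ≥0∞) (hp : 1 < p) (A : ℝ) (hA : 0 < A)
    (hlb : ∀ α β : 𝕜,
      A * (if p = ⊤ then max ‖α‖ ‖β‖
        else (‖α‖ ^ p.toReal + ‖β‖ ^ p.toReal) ^ (p.toReal⁻¹)) ≤ ‖α • φ + β • ψ‖) :
    ∃ x : ℕ → E, (∀ m, ‖x m‖ ≤ 1) ∧
      Tendsto (fun m => φ (x m)) atTop (𝓝 (A : 𝕜)) ∧
      Tendsto (fun m => ψ (x m)) atTop (𝓝 0) :=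
  exists_seq_of_lower_lp_estimate_pair_general φ ψ p hp A hA hlb
end
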